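/- Let J be a nonempty order ideal of the product of chains C_d = [d_1]×…×[d_k]. Then the simplicial complex M_d(J) is vertex-decomposable. -/
import Mathlib


/-- Membership in the product of chains `C_d = [d 1] × … × [d k]`. -/
def MemChainProd {k : ℕ} (d : Fin k → ℕ) (x : Fin k → ℕ) : Prop :=
  ∀ i, 1 ≤ x i ∧ x i ≤ d i

/-- The facet `F_x = ⋃_{i=1}^k ([d i] \ {d i + 1 - x i}) × {i}` of the M-complex. -/
def facetOf {k : ℕ} (d : Fin k → ℕ) (x : Fin k → ℕ) : Finset (ℕ × Fin k) :=
  Finset.univ.biUnion fun i =>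
    ((Finset.Icc 1 (d i)).erase (d i + 1 - x i)).image fun a => (a, i)

/-- The simplicial complex `M_d(J)`: all faces, i.e. all subsets of the facets `F_x`, `x ∈ J`. -/
def facesMd {k : ℕ} (d : Fin k → ℕ) (J : Finset (Fin k → ℕ)) : Finset (Finset (ℕ × Fin k)) :=
  J.biUnion fun x => (facetOf d x).powerset

/-- The deletion of a vertex `v` from a (finite) simplicial complex `X`. -/
def delC {V : Type*} [DecidableEq V] (X : Finset (Finset V)) (v : V) : Finset (Finset V) :=
  X.filter fun F => v ∉ F

/-- The link of a vertex `v` in a (finite) simplicial complex `X`. -/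
def linkC {V : Type*} [DecidableEq V] (X : Finset (Finset V)) (v : V) : Finset (Finset V) :=
  (X.filter fun F => v ∈ F).image fun F => F.erase v

/-- `F` is a facet (maximal face) of the simplicial complex `X`. -/
def IsFacetC {V : Type*} (X : Finset (Finset V)) (F : Finset V) : Prop :=
  F ∈ X ∧ ∀ G ∈ X, F ⊆ G → F = G

/-- A simplicial complex is pure if all its facets have the same cardinality. -/
def IsPureC {V : Type*} (X : Finset (Finset V)) : Prop :=
  ∀ F G : Finset V, IsFacetC X F → IsFacetC X G → F.card = G.card

/-- Vertex-decomposability: `X` is a simplex (possibly empty), or there is a vertex `v`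
(a shedding vertex) such that `del X v` is pure, and both `link X v` and `del X v`
are vertex-decomposable. -/
inductive IsVD {V : Type*} [DecidableEq V] : Finset (Finset V) → Prop
  | simplex (G : Finset V) : IsVD G.powerset
  | step (X : Finset (Finset V)) (v : V) (hv : {v} ∈ X)
      (hshed : IsPureC (delC X v)) (hlink : IsVD (linkC X v)) (hdel : IsVD (delC X v)) :
      IsVD X


lemma mem_facetOf {k : ℕ} (d x : Fin k → ℕ) (a : ℕ) (j : Fin k) :
    (a, j) ∈ facetOf d x ↔ 1 ≤ a ∧ a ≤ d j ∧ a ≠ d j + 1 - x j := by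
  simp only [facetOf, Finset.mem_biUnion, Finset.mem_univ, true_and, Finset.mem_image,
    Finset.mem_erase, Finset.mem_Icc, Prod.mk.injEq]
  constructor
  · rintro ⟨i, b, ⟨hb3, hb1, hb2⟩, rfl, rfl⟩; exact ⟨hb1, hb2, hb3⟩
  · rintro ⟨h1, h2, h3⟩; exact ⟨j, a, ⟨h3, h1, h2⟩, rfl, rfl⟩

lemma mem_facesMd {k : ℕ} (d : Fin k → ℕ) (J : Finset (Fin k → ℕ)) (F : Finset (ℕ × Fin k)) :
    F ∈ facesMd d J ↔ ∃ x ∈ J, F ⊆ facetOf d x := by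
  simp [facesMd]

lemma card_facetOf {k : ℕ} (d x : Fin k → ℕ) (hx : MemChainProd d x) :
    (facetOf d x).card = ∑ i, (d i - 1) := by
  rw [facetOf, Finset.card_biUnion]
  · refine Finset.sum_congr rfl fun i _ => ?_
    rw [Finset.card_image_of_injective _ (fun a b h => (Prod.mk.injEq _ _ _ _ ▸ h : _ ∧ _).1)]
    rw [Finset.card_erase_of_mem, Nat.card_Icc]
    · omega
    · rw [Finset.mem_Icc]; have := hx i; omega
  · intro i _ j _ hij
    simp only [Finset.disjoint_left, Finset.mem_image]
    rintro ⟨a, b⟩ ⟨c, _, h⟩ ⟨c', _, h'⟩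
    injection h with h1 h2
    injection h' with h3 h4
    exact hij (h2.trans h4.symm)

lemma facet_mem_facesMd {k : ℕ} {d : Fin k → ℕ} {J : Finset (Fin k → ℕ)} {x : Fin k → ℕ}
    (hx : x ∈ J) : facetOf d x ∈ facesMd d J :=
  (mem_facesMd _ _ _).2 ⟨x, hx, subset_rfl⟩

lemma pure_facesMd {k : ℕ} (d : Fin k → ℕ) (J : Finset (Fin k → ℕ))
    (hJsub : ∀ x ∈ J, MemChainProd d x) : IsPureC (facesMd d J) := by
  intro F G hF hG
  obtain ⟨x, hx, hFx⟩ := (mem_facesMd _ _ _).1 hF.1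
  obtain ⟨y, hy, hGy⟩ := (mem_facesMd _ _ _).1 hG.1
  rw [hF.2 _ (facet_mem_facesMd hx) hFx, hG.2 _ (facet_mem_facesMd hy) hGy,
    card_facetOf _ _ (hJsub x hx), card_facetOf _ _ (hJsub y hy)]

lemma mem_linkC {V : Type*} [DecidableEq V] (X : Finset (Finset V)) (v : V) (F : Finset V) :
    F ∈ linkC X v ↔ v ∉ F ∧ insert v F ∈ X := by
  simp only [linkC, Finset.mem_image, Finset.mem_filter]
  constructor
  · rintro ⟨G, ⟨hG, hv⟩, rfl⟩
    exact ⟨Finset.notMem_erase _ _, by rwa [Finset.insert_erase hv]⟩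
  · rintro ⟨hv, hF⟩
    exact ⟨insert v F, ⟨hF, Finset.mem_insert_self _ _⟩, Finset.erase_insert hv⟩

lemma delC_facesMd {k : ℕ} (d : Fin k → ℕ) (J : Finset (Fin k → ℕ)) (i : Fin k)
    (hJsub : ∀ x ∈ J, MemChainProd d x)
    (hJideal : ∀ x ∈ J, ∀ y : Fin k → ℕ, MemChainProd d y → y ≤ x → y ∈ J) :
    delC (facesMd d J) (d i, i) = facesMd d (J.filter fun x => x i = 1) := by
  ext F
  simp only [delC, Finset.mem_filter, mem_facesMd]
  constructor
  · rintro ⟨⟨x, hx, hFx⟩, hv⟩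
    have hxm := hJsub x hx
    refine ⟨Function.update x i 1, ⟨?_, Function.update_self _ _ _⟩, ?_⟩
    · refine hJideal x hx _ (fun j => ?_) (fun j => ?_)
      · rcases eq_or_ne j i with rfl | hne
        · rw [Function.update_self]; have := hxm j; omega
        · rw [Function.update_of_ne hne]; exact hxm j
      · rcases eq_or_ne j i with rfl | hne
        · rw [Function.update_self]; exact (hxm j).1
        · rw [Function.update_of_ne hne]
    · rintro ⟨a, j⟩ ha
      have hmem := hFx ha
      rw [mem_facetOf] at hmem ⊢
      rcases eq_or_ne j i with rfl | hne
      · rw [Function.update_self]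
        have hne' : a ≠ d j := fun h => hv (h ▸ ha)
        omega
      · rw [Function.update_of_ne hne]; exact hmem
  · rintro ⟨x, hx, hFx⟩
    obtain ⟨hxJ, hxi⟩ := hx
    refine ⟨⟨x, hxJ, hFx⟩, fun hv => ?_⟩
    have := hFx hv
    rw [mem_facetOf, hxi] at this
    omega

lemma facetOf_erase {k : ℕ} (d x : Fin k → ℕ) (i : Fin k) (hx : MemChainProd d x)
    (h2 : 2 ≤ x i) :
    (facetOf d x).erase (d i, i) =
      facetOf (Function.update d i (d i - 1)) (Function.update x i (x i - 1)) := by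
  ext ⟨a, j⟩
  rw [Finset.mem_erase, mem_facetOf, mem_facetOf]
  rcases eq_or_ne j i with rfl | hne
  · rw [Function.update_self, Function.update_self]
    have h1 := hx j
    simp only [ne_eq, Prod.mk.injEq, and_true]
    omega
  · rw [Function.update_of_ne hne, Function.update_of_ne hne]
    simp only [ne_eq, Prod.mk.injEq]
    have : ¬(a = d i ∧ j = i) := fun h => hne h.2
    tauto

lemma linkC_facesMd {k : ℕ} (d : Fin k → ℕ) (J : Finset (Fin k → ℕ)) (i : Fin k)
    (hJsub : ∀ x ∈ J, MemChainProd d x) :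
    linkC (facesMd d J) (d i, i) =
      facesMd (Function.update d i (d i - 1))
        ((J.filter fun x => 2 ≤ x i).image fun x => Function.update x i (x i - 1)) := by
  ext F
  rw [mem_linkC, mem_facesMd]
  constructor
  · rintro ⟨hvF, hins⟩
    obtain ⟨x, hx, hFx⟩ := hins
    have hxm := hJsub x hx
    have hxi : 2 ≤ x i := by
      have hv := hFx (Finset.mem_insert_self _ _)
      rw [mem_facetOf] at hv
      have := hxm i
      omega
    rw [mem_facesMd]
    refine ⟨_, Finset.mem_image_of_mem _ (Finset.mem_filter.2 ⟨hx, hxi⟩), ?_⟩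
    rw [← facetOf_erase d x i hxm hxi]
    intro a ha
    exact Finset.mem_erase.2 ⟨fun h => hvF (h ▸ ha), hFx (Finset.mem_insert_of_mem ha)⟩
  · intro hmem
    obtain ⟨y, hy, hF⟩ := (mem_facesMd _ _ _).1 hmem
    obtain ⟨x, hxf, rfl⟩ := Finset.mem_image.1 hy
    obtain ⟨hx, hxi⟩ := Finset.mem_filter.1 hxf
    have hxm := hJsub x hx
    rw [← facetOf_erase d x i hxm hxi] at hF
    refine ⟨fun hvF => Finset.notMem_erase _ _ (hF hvF), x, hx, fun a ha => ?_⟩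
    rcases Finset.mem_insert.1 ha with rfl | ha'
    · rw [mem_facetOf]
      have := hxm i
      refine ⟨by omega, le_rfl, by omega⟩
    · exact Finset.mem_of_mem_erase (hF ha')

lemma main_lemma {k : ℕ} (n : ℕ) : ∀ (d : Fin k → ℕ) (J : Finset (Fin k → ℕ)),
    (∑ i, d i) + J.card ≤ n → J.Nonempty → (∀ x ∈ J, MemChainProd d x) →
    (∀ x ∈ J, ∀ y : Fin k → ℕ, MemChainProd d y → y ≤ x → y ∈ J) →
    IsVD (facesMd d J) := by
  induction n with
  | zero =>
    intro d J hn hne _ _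
    have := Finset.card_pos.2 hne
    omega
  | succ n ih =>
    intro d J hn hne hsub hideal
    by_cases hcase : ∃ i : Fin k, ∃ x ∈ J, 2 ≤ x i
    · obtain ⟨i, x0, hx0, hx0i⟩ := hcase
      have hdi : 1 ≤ d i := le_trans (by omega) (hsub x0 hx0 i).2
      have hones : (fun _ => 1 : Fin k → ℕ) ∈ J :=
        hideal x0 hx0 _ (fun j => ⟨le_rfl, le_trans (hsub x0 hx0 j).1 (hsub x0 hx0 j).2⟩)
          (fun j => (hsub x0 hx0 j).1)
      refine IsVD.step _ (d i, i) ?_ ?_ ?_ ?_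
      · rw [mem_facesMd]
        refine ⟨x0, hx0, Finset.singleton_subset_iff.2 ?_⟩
        rw [mem_facetOf]
        have := hsub x0 hx0 i
        exact ⟨hdi, le_rfl, by omega⟩
      · rw [delC_facesMd d J i hsub hideal]
        exact pure_facesMd _ _ (fun x hx => hsub x (Finset.mem_filter.1 hx).1)
      · rw [linkC_facesMd d J i hsub]
        refine ih _ _ ?_ ?_ ?_ ?_
        · have hsum : ∑ j, Function.update d i (d i - 1) j = (∑ j, d j) - 1 := by
            rw [Finset.sum_update_of_mem (Finset.mem_univ i)]
            have h2 : ∑ j, d j = d i + ∑ j ∈ Finset.univ \ {i}, d j :=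
              Finset.sum_eq_add_sum_sdiff_singleton_of_mem (Finset.mem_univ i) d
            omega
          have h1 : ((J.filter fun x => 2 ≤ x i).image
              fun x => Function.update x i (x i - 1)).card ≤ J.card :=
            le_trans Finset.card_image_le (Finset.card_filter_le _ _)
          have hs1 : 1 ≤ ∑ j, d j :=
            hdi.trans (Finset.single_le_sum (fun j _ => Nat.zero_le (d j)) (Finset.mem_univ i))
          rw [hsum]
          generalize hA : ((J.filter fun x => 2 ≤ x i).image
            fun x => Function.update x i (x i - 1)).card = A at h1 ⊢
          generalize hB : (∑ j, d j) = B at hn hs1 ⊢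
          clear hsum hA hB
          omega
        · exact ⟨_, Finset.mem_image_of_mem _ (Finset.mem_filter.2 ⟨hx0, hx0i⟩)⟩
        · rintro y hy
          obtain ⟨x, hxf, rfl⟩ := Finset.mem_image.1 hy
          obtain ⟨hx, hxi⟩ := Finset.mem_filter.1 hxf
          intro j
          by_cases hj : j = i
          · subst hj
            simp only [Function.update_self]
            have := hsub x hx j
            omega
          · simp only [Function.update_of_ne hj]
            exact hsub x hx j
        · rintro z hz y hym hyz
          obtain ⟨x, hxf, rfl⟩ := Finset.mem_image.1 hz
          obtain ⟨hx, hxi⟩ := Finset.mem_filter.1 hxf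
          have hyp : Function.update y i (y i + 1) ∈ J := by
            refine hideal x hx _ (fun j => ?_) (fun j => ?_)
            · by_cases hj : j = i
              · subst hj
                simp only [Function.update_self]
                have h1 := hym j
                simp only [Function.update_self] at h1
                have h2 := hsub x hx j
                omega
              · simp only [Function.update_of_ne hj]
                have h1 := hym j
                simpa only [Function.update_of_ne hj] using h1
            · by_cases hj : j = i
              · subst hj
                simp only [Function.update_self]
                have h1 := hyz j
                simp only [Function.update_self] at h1
                omega
              · simp only [Function.update_of_ne hj]
                have h1 := hyz j
                simpa only [Function.update_of_ne hj] using h1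
          have hyeq : y = Function.update (Function.update y i (y i + 1)) i
              (Function.update y i (y i + 1) i - 1) := by
            rw [Function.update_self, Function.update_idem]
            simp [Function.update_eq_self]
          rw [hyeq]
          refine Finset.mem_image_of_mem _ (Finset.mem_filter.2 ⟨hyp, ?_⟩)
          show 2 ≤ Function.update y i (y i + 1) i
          have h1 := (hym i).1
          rw [Function.update_self]
          omega
      · rw [delC_facesMd d J i hsub hideal]
        refine ih _ _ ?_ ?_ ?_ ?_
        · have hlt : (J.filter fun x => x i = 1).card < J.card := by
            refine Finset.card_lt_card ⟨Finset.filter_subset _ _, fun hsub' => ?_⟩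
            have := Finset.mem_filter.1 (hsub' hx0)
            omega
          generalize hC : (J.filter fun x => x i = 1).card = C at hlt ⊢
          clear hC
          omega
        · exact ⟨_, Finset.mem_filter.2 ⟨hones, rfl⟩⟩
        · exact fun x hx => hsub x (Finset.mem_filter.1 hx).1
        · rintro x hx y hym hyx
          obtain ⟨hxJ, hxi⟩ := Finset.mem_filter.1 hx
          refine Finset.mem_filter.2 ⟨hideal x hxJ y hym hyx, ?_⟩
          show y i = 1
          have h1 := hym i
          have h2 : y i ≤ x i := hyx i
          have h3 : x i = 1 := hxi
          omega
    · push_neg at hcase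
      obtain ⟨x0, hx0⟩ := hne
      have hJeq : J = {fun _ => 1} := by
        apply Finset.eq_singleton_iff_nonempty_unique_mem.2
        refine ⟨⟨x0, hx0⟩, fun x hx => funext fun j => ?_⟩
        have h1 := (hsub x hx j).1
        have h2 := hcase j x hx
        omega
      rw [hJeq]
      rw [show facesMd d {fun _ => 1} = (facetOf d fun _ => 1).powerset from
        Finset.singleton_biUnion]
      exact IsVD.simplex _

/-- Let `J` be a nonempty order ideal of the product of chains `C_d`.
Then the simplicial complex `M_d(J)` is vertex-decomposable. -/
theorem statement3 {k : ℕ} (d : Fin k → ℕ) (J : Finset (Fin k → ℕ))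
    (hJne : J.Nonempty)
    (hJsub : ∀ x ∈ J, MemChainProd d x)
    (hJideal : ∀ x ∈ J, ∀ y : Fin k → ℕ, MemChainProd d y → y ≤ x → y ∈ J) :
    IsVD (facesMd d J) := by
  exact main_lemma ((∑ i, d i) + J.card) d J le_rfl hJne hJsub hJideal
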